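/- arXiv:0711.5010 — 4 statements merged into one kernel-verified Lean document; each statement's English description precedes it below -/
import Mathlib

section
/- For any finite tree graph T connecting points w_1,...,w_l together with additional internal points u_1,...,u_q in the plane, define ||T|| as the sum over edges of T of the square root of the Euclidean distance between the edge's endpoints. Then there exists a chain C (a path visiting all and only the points w_1,...,w_l, each exactly once), whose combinatorial structure depends only on T and not on the positions of the internal points, such that 2·||T|| ≥ ||C||, where ||C|| is the sum over consecutive pairs in the chain of the square root of their Euclidean distance. -/
open List in
noncomputable section

variable {α : Type*}

def chainSum (δ : α → α → ℝ) : List α → ℝ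
  | [] => 0
  | [_] => 0
  | a :: b :: t => δ a b + chainSum δ (b :: t)

variable {δ : α → α → ℝ}

lemma chainSum_nil : chainSum δ [] = 0 := rfl
lemma chainSum_single (a : α) : chainSum δ [a] = 0 := rfl
lemma chainSum_cons_cons (a b : α) (t : List α) :
    chainSum δ (a :: b :: t) = δ a b + chainSum δ (b :: t) := rfl

variable (hnn : ∀ a b, 0 ≤ δ a b) (hsy : ∀ a b, δ a b = δ b a)
  (htr : ∀ a b c, δ a c ≤ δ a b + δ b c)

include hnn in
lemma chainSum_nonneg (L : List α) : 0 ≤ chainSum δ L := by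
  induction L with
  | nil => simp [chainSum_nil]
  | cons a t ih =>
    cases t with
    | nil => simp [chainSum_single]
    | cons b s => rw [chainSum_cons_cons]; exact add_nonneg (hnn a b) ih

include hnn htr in
lemma chainSum_cons_le (a b : α) (t : List α) :
    chainSum δ (a :: t) ≤ δ a b + chainSum δ (b :: t) := by
  cases t with
  | nil => simpa [chainSum_single] using hnn a b
  | cons c s =>
    rw [chainSum_cons_cons, chainSum_cons_cons]
    have := htr a b c
    linarith

include hnn htr in
lemma chainSum_sublist_cons : ∀ {M L : List α}, M.Sublist L → ∀ a,
    chainSum δ (a :: M) ≤ chainSum δ (a :: L) := by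
  intro M L h
  induction h with
  | slnil => intro a; simp [chainSum_single]
  | @cons l₁ l₂ b _ ih =>
    intro a
    calc chainSum δ (a :: l₁) ≤ chainSum δ (a :: l₂) := ih a
    _ ≤ δ a b + chainSum δ (b :: l₂) := chainSum_cons_le hnn htr a b l₂
    _ = chainSum δ (a :: b :: l₂) := (chainSum_cons_cons a b l₂).symm
  | @cons_cons l₁ l₂ b _ ih =>
    intro a
    rw [chainSum_cons_cons, chainSum_cons_cons]
    exact add_le_add_right (ih b) _

include hnn htr in
lemma chainSum_sublist {M L : List α} (h : M.Sublist L) :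
    chainSum δ M ≤ chainSum δ L := by
  induction h with
  | slnil => exact le_refl _
  | @cons l₁ l₂ b _ ih =>
    refine ih.trans ?_
    cases l₂ with
    | nil => simp [chainSum_nil, chainSum_single]
    | cons c s =>
      rw [chainSum_cons_cons]
      have := hnn b c
      linarith
  | @cons_cons l₁ l₂ b h _ => exact chainSum_sublist_cons hnn htr h b

lemma chainSum_map {β : Type*} (g : β → α) (M : List β) :
    chainSum (fun a b => δ (g a) (g b)) M = chainSum δ (M.map g) := by
  induction M with
  | nil => rfl
  | cons a t ih =>
    cases t with
    | nil => rfl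
    | cons b s =>
      rw [chainSum_cons_cons, List.map_cons, List.map_cons, chainSum_cons_cons, ← List.map_cons, ih]

lemma chainSum_append_cons (L1 : List α) (y : α) (L2 : List α) :
    chainSum δ (L1 ++ y :: L2) = chainSum δ (L1 ++ [y]) + chainSum δ (y :: L2) := by
  induction L1 with
  | nil => simp [chainSum_single]
  | cons a t ih =>
    cases t with
    | nil => simp [chainSum_cons_cons, chainSum_single, chainSum_nil]
    | cons b s =>
      simp only [List.cons_append, chainSum_cons_cons] at *
      rw [ih]; ring

include hnn hsy htr in
lemma chainSum_insert_le (L1 : List α) (y x : α) (L2 : List α) :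
    chainSum δ (L1 ++ y :: x :: L2) ≤ chainSum δ (L1 ++ y :: L2) + 2 * δ x y := by
  rw [chainSum_append_cons L1 y (x :: L2), chainSum_append_cons L1 y L2]
  rw [chainSum_cons_cons]
  cases L2 with
  | nil =>
    simp only [chainSum_single]
    have := hnn x y
    rw [hsy y x]
    linarith
  | cons z s =>
    rw [chainSum_cons_cons, chainSum_cons_cons]
    have h1 := htr x y z
    have := hsy y x
    linarith

lemma chainSum_eq_sum_fin (M : List α) :
    chainSum δ M = ∑ i : Fin (M.length - 1),
      δ (M.get ⟨i.1, by omega⟩) (M.get ⟨i.1 + 1, by have := i.isLt; omega⟩) := by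
  induction M with
  | nil => simp [chainSum_nil]
  | cons a t ih =>
    cases t with
    | nil => simp [chainSum_single]
    | cons b s =>
      rw [chainSum_cons_cons, ih]
      have key : ∑ x : Fin (s.length + 1),
            δ ((a :: b :: s).get ⟨x.1, by have := x.isLt; simp only [List.length_cons]; omega⟩)
              ((a :: b :: s).get ⟨x.1 + 1, by have := x.isLt; simp only [List.length_cons]; omega⟩)
          = δ a b + ∑ x : Fin s.length,
            δ ((b :: s).get ⟨x.1, by have := x.isLt; simp only [List.length_cons]; omega⟩)
              ((b :: s).get ⟨x.1 + 1, by have := x.isLt; simp only [List.length_cons]; omega⟩) := by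
        rw [Fin.sum_univ_succ]
        simp [List.get]
      exact key.symm

end



noncomputable section
open SimpleGraph

variable {V : Type} [Fintype V] [DecidableEq V]

lemma exists_leaf (G : SimpleGraph V) [DecidableRel G.Adj] (hG : G.IsTree)
    (h2 : 2 ≤ Fintype.card V) : ∃ x y : V, G.neighborFinset x = {y} := by
  have hdegpos : ∀ v : V, 0 < G.degree v := by
    intro v
    rw [G.degree_pos_iff_exists_adj]
    obtain ⟨w, hw⟩ := Fintype.exists_ne_of_one_lt_card (by omega) v
    obtain ⟨p⟩ := hG.isConnected.preconnected v w
    cases p with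
    | nil => exact absurd rfl hw.symm
    | cons h q => exact ⟨_, h⟩
  by_contra hcon
  push_neg at hcon
  have hdeg2 : ∀ v : V, 2 ≤ G.degree v := by
    intro v
    have h1 : G.degree v ≠ 1 := by
      intro h
      obtain ⟨y, hy⟩ := Finset.card_eq_one.mp h
      exact hcon v y hy
    have := hdegpos v
    omega
  have hsum := G.sum_degrees_eq_twice_card_edges
  have hcard := hG.card_edgeFinset
  have hle : 2 * Fintype.card V ≤ ∑ v, G.degree v := by
    calc 2 * Fintype.card V = ∑ _v : V, 2 := by simp [mul_comm]
    _ ≤ ∑ v, G.degree v := Finset.sum_le_sum fun v _ => hdeg2 v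
  omega

variable {G : SimpleGraph V} [DecidableRel G.Adj] {x y : V}

lemma adj_x_iff (hnb : G.neighborFinset x = {y}) : ∀ z, G.Adj x z ↔ z = y := by
  intro z
  rw [← SimpleGraph.mem_neighborFinset, hnb, Finset.mem_singleton]

lemma not_mem_support_of_path (hnb : G.neighborFinset x = {y}) {u v : V}
    (P : G.Walk u v) (hP : P.IsPath) (hu : u ≠ x) (hv : v ≠ x) : x ∉ P.support := by
  intro hx
  have hP1 : (P.takeUntil x hx).IsPath := hP.takeUntil hx
  have hP2 : (P.dropUntil x hx).IsPath := hP.dropUntil hx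
  have hn1 : ¬ (P.takeUntil x hx).reverse.Nil := Walk.not_nil_of_ne (Ne.symm hu)
  have hn2 : ¬ (P.dropUntil x hx).Nil := Walk.not_nil_of_ne (Ne.symm hv)
  obtain ⟨w1, h1, q1, hq1⟩ := Walk.not_nil_iff.mp hn1
  obtain ⟨w2, h2, q2, hq2⟩ := Walk.not_nil_iff.mp hn2
  have hw1 : w1 = y := (adj_x_iff hnb w1).mp h1
  have hw2 : w2 = y := (adj_x_iff hnb w2).mp h2
  have hy1 : y ∈ (P.takeUntil x hx).support := by
    rw [← List.mem_reverse, ← Walk.support_reverse, hq1, Walk.support_cons]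
    exact List.mem_cons_of_mem _ (hw1 ▸ q1.start_mem_support)
  have hy2 : y ∈ (P.dropUntil x hx).support.tail := by
    rw [hq2, Walk.support_cons, List.tail_cons]
    exact hw2 ▸ q2.start_mem_support
  have hnd := hP.support_nodup
  rw [← P.take_spec hx, Walk.support_append] at hnd
  rw [List.nodup_append] at hnd
  exact hnd.2.2 y hy1 y hy2 rfl

lemma lift_reachable_aux : ∀ {u v : V} (P : G.Walk u v) (hu : u ≠ x) (hv : v ≠ x),
    x ∉ P.support → (G.comap (Subtype.val : {v : V // v ≠ x} → V)).Reachable ⟨u, hu⟩ ⟨v, hv⟩ := by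
  intro u v P
  induction P with
  | nil => intro hu hv _; rfl
  | @cons u w v h q ih =>
    intro hu hv hs
    rw [Walk.support_cons] at hs
    have hxq : x ∉ q.support := fun hh => hs (List.mem_cons_of_mem _ hh)
    have hw : w ≠ x := fun hh => hxq (hh ▸ q.start_mem_support)
    exact Reachable.trans
      (SimpleGraph.Adj.reachable (show (G.comap (Subtype.val : {v : V // v ≠ x} → V)).Adj ⟨u, hu⟩ ⟨w, hw⟩ from h))
      (ih hw hv hxq)

lemma subtree_isTree (hG : G.IsTree) (hnb : G.neighborFinset x = {y}) :
    (G.comap (Subtype.val : {v : V // v ≠ x} → V)).IsTree := by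
  constructor
  · rw [connected_iff]
    constructor
    · rintro ⟨u, hu⟩ ⟨v, hv⟩
      obtain ⟨P, hP⟩ := (hG.existsUnique_path u v).exists
      exact lift_reachable_aux P hu hv (not_mem_support_of_path hnb P hP hu hv)
    · have : 2 ≤ Fintype.card V := by
        have h1 : 1 ≤ G.degree x := by
          rw [← G.card_neighborFinset_eq_degree, hnb]; simp
        have hy : G.Adj x y := (adj_x_iff hnb y).mpr rfl
        have : x ≠ y := G.ne_of_adj hy
        exact Fintype.one_lt_card_iff.mpr ⟨x, y, this⟩
      obtain ⟨v, hv⟩ := Fintype.exists_ne_of_one_lt_card (by omega) x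
      exact ⟨⟨v, hv⟩⟩
  · intro v c hc
    have := hc.map (f := (SimpleGraph.Embedding.comap
      ⟨Subtype.val, Subtype.val_injective⟩ G).toHom) Subtype.val_injective
    exact hG.IsAcyclic _ this

end

noncomputable section
open SimpleGraph

theorem tour : ∀ (n : ℕ) (V : Type) [Fintype V] (G : SimpleGraph V),
    Fintype.card V ≤ n → G.IsTree →
    ∃ L : List V, L.Nodup ∧ (∀ v, v ∈ L) ∧
      ∀ (δ : V → V → ℝ) (f : Sym2 V → ℝ) [Fintype G.edgeSet],
        (∀ a b, 0 ≤ δ a b) → (∀ a b, δ a b = δ b a) → (∀ a b c, δ a c ≤ δ a b + δ b c) →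
        (∀ a b, G.Adj a b → δ a b ≤ f (s(a, b))) → (∀ e, 0 ≤ f e) →
        chainSum δ L ≤ 2 * ∑ e ∈ G.edgeFinset, f e := by
  intro n
  induction n with
  | zero =>
    intro V _ G hcard hG
    obtain ⟨v⟩ := hG.isConnected.nonempty
    have : 0 < Fintype.card V := Fintype.card_pos_iff.mpr ⟨v⟩
    omega
  | succ n ih =>
    intro V _ G hcard hG
    classical
    by_cases hsmall : Fintype.card V ≤ 1
    · -- single vertex
      obtain ⟨v⟩ := hG.isConnected.nonempty
      have h1 : Fintype.card V = 1 := le_antisymm hsmall (Fintype.card_pos_iff.mpr ⟨v⟩)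
      obtain ⟨w, hw⟩ := Fintype.card_eq_one_iff.mp h1
      refine ⟨[w], List.nodup_singleton w, fun v => by simp [hw v], ?_⟩
      intro δ f _ hnn hsy htr hadj hf0
      rw [chainSum_single]
      have := Finset.sum_nonneg (fun e (_ : e ∈ G.edgeFinset) => hf0 e)
      linarith
    · push_neg at hsmall
      obtain ⟨x, y, hnb⟩ := exists_leaf G hG (by omega)
      set V' := {v : V // v ≠ x} with hV'
      set G' := G.comap (Subtype.val : V' → V) with hG'
      have hcard' : Fintype.card V' ≤ n := by
        have h0 : Fintype.card V' = Fintype.card {v : V // ¬ v = x} :=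
          Fintype.card_congr (Equiv.subtypeEquivRight (by tauto))
        have h1 : Fintype.card {v : V // ¬ v = x}
            = Fintype.card V - Fintype.card {v : V // v = x} :=
          Fintype.card_subtype_compl _
        rw [Fintype.card_subtype_eq] at h1
        omega
      obtain ⟨L', hnd', hall', hb'⟩ := ih V' G' hcard' (subtree_isTree hG hnb)
      have hyx : y ≠ x := by
        have : G.Adj x y := (adj_x_iff hnb y).mpr rfl
        exact fun h => G.irrefl (h ▸ this)
      set LV := L'.map (Subtype.val : V' → V) with hLV
      have hyLV : y ∈ LV := List.mem_map.mpr ⟨⟨y, hyx⟩, hall' _, rfl⟩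
      obtain ⟨L1, L2, hsplit⟩ := List.append_of_mem hyLV
      have hxLV : x ∉ LV := by
        rw [hLV]
        simp only [List.mem_map]
        rintro ⟨⟨v, hv⟩, _, h⟩
        exact hv h
      have hndLV : LV.Nodup := hnd'.map Subtype.val_injective
      refine ⟨L1 ++ y :: x :: L2, ?_, ?_, ?_⟩
      · rw [hsplit] at hndLV hxLV
        simp only [List.nodup_append, List.nodup_cons, List.mem_append, List.mem_cons,
          List.disjoint_left, not_or] at hndLV hxLV ⊢
        refine ⟨hndLV.1, ⟨⟨fun h => hxLV.2.1 h.symm, hndLV.2.1.1⟩, hxLV.2.2, hndLV.2.1.2⟩,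
          fun a ha b hb => by
            rcases hb with hb | hb | hb
            · exact hb ▸ hndLV.2.2 a ha y (Or.inl rfl)
            · exact fun h => hxLV.1 (by rw [← hb, ← h]; exact ha)
            · exact hndLV.2.2 a ha b (Or.inr hb)⟩
      · intro v
        by_cases hv : v = x
        · subst hv; simp
        · have : v ∈ LV := List.mem_map.mpr ⟨⟨v, hv⟩, hall' _, rfl⟩
          rw [hsplit] at this
          simp only [List.mem_append, List.mem_cons] at this ⊢
          tauto
      · intro δ f instE hnn hsy htr hadj hf0
        set δ' : V' → V' → ℝ := fun a b => δ a.1 b.1 with hδ'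
        set f' : Sym2 V' → ℝ := fun e => f (Sym2.map Subtype.val e) with hf'
        have hb := hb' δ' f' (fun a b => hnn _ _) (fun a b => hsy _ _)
          (fun a b c => htr _ _ _)
          (fun a b hab => by
            simpa [hf', Sym2.map_pair_eq] using hadj a.1 b.1 hab)
          (fun e => hf0 _)
        have hAdjxy : G.Adj x y := (adj_x_iff hnb y).mpr rfl
        -- edge set split
        have hkey : G.edgeFinset =
            insert (s(x, y)) (G'.edgeFinset.image (Sym2.map Subtype.val)) := by
          ext e
          simp only [mem_edgeFinset, Finset.mem_insert, Finset.mem_image]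
          refine Sym2.ind (fun u v => ?_) e
          constructor
          · intro he
            rw [mem_edgeSet] at he
            by_cases hu : u = x
            · subst hu
              left
              rw [(adj_x_iff hnb v).mp he]
            · by_cases hv : v = x
              · subst hv
                left
                rw [(adj_x_iff hnb u).mp he.symm, Sym2.eq_swap]
              · right
                refine ⟨s(⟨u, hu⟩, ⟨v, hv⟩), ?_, by simp [Sym2.map_pair_eq]⟩
                rw [mem_edgeSet]
                exact he
          · rintro (h | ⟨e', he', hmap⟩)
            · rw [h, mem_edgeSet]
              exact hAdjxy
            · rw [← hmap]
              revert he'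
              refine Sym2.ind (fun a b he' => ?_) e'
              rw [Sym2.map_pair_eq, mem_edgeSet]
              rw [mem_edgeSet] at he'
              exact he'
        have hnotmem : s(x, y) ∉ G'.edgeFinset.image (Sym2.map Subtype.val) := by
          rw [Finset.mem_image]
          rintro ⟨e', -, hmap⟩
          revert hmap
          refine Sym2.ind (fun a b => ?_) e'
          intro hmap
          simp only [Sym2.map_pair_eq, Sym2.eq, Sym2.rel_iff', Prod.swap_prod_mk, Prod.mk.injEq] at hmap
          obtain ⟨h1, -⟩ | ⟨h1, h2⟩ := hmap
          · exact a.2 h1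
          · exact b.2 h2
        have hsum : ∑ e ∈ G.edgeFinset, f e
            = f (s(x, y)) + ∑ e ∈ G'.edgeFinset, f' e := by
          rw [hkey, Finset.sum_insert hnotmem,
            Finset.sum_image (fun a _ b _ h => Sym2.map.injective Subtype.val_injective h)]
        calc chainSum δ (L1 ++ y :: x :: L2)
            ≤ chainSum δ (L1 ++ y :: L2) + 2 * δ x y :=
              chainSum_insert_le hnn hsy htr L1 y x L2
          _ = chainSum δ' L' + 2 * δ x y := by
              rw [← hsplit]
              show chainSum δ (List.map Subtype.val L') + 2 * δ x y = _
              rw [← chainSum_map]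
          _ ≤ 2 * ∑ e ∈ G'.edgeFinset, f' e + 2 * f (s(x, y)) := by
              have := hadj x y hAdjxy
              linarith
          _ = 2 * ∑ e ∈ G.edgeFinset, f e := by rw [hsum]; ring

end

noncomputable section

lemma sqrt_triangle {E : Type*} [PseudoMetricSpace E] (a b c : E) :
    Real.sqrt (dist a c) ≤ Real.sqrt (dist a b) + Real.sqrt (dist b c) := by
  have h1 : Real.sqrt (dist a c) ≤ Real.sqrt (dist a b + dist b c) :=
    Real.sqrt_le_sqrt (dist_triangle a b c)
  refine h1.trans ?_
  have hab := dist_nonneg (x := a) (y := b)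
  have hbc := dist_nonneg (x := b) (y := c)
  have h2 : dist a b + dist b c ≤ (Real.sqrt (dist a b) + Real.sqrt (dist b c)) ^ 2 := by
    nlinarith [Real.sq_sqrt hab, Real.sq_sqrt hbc, Real.sqrt_nonneg (dist a b),
      Real.sqrt_nonneg (dist b c)]
  calc Real.sqrt (dist a b + dist b c)
      ≤ Real.sqrt ((Real.sqrt (dist a b) + Real.sqrt (dist b c)) ^ 2) := Real.sqrt_le_sqrt h2
    _ = _ := Real.sqrt_sq (by positivity)

lemma filterMap_inl_sublist {α β : Type*} (L : List (α ⊕ β)) :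
    ((L.filterMap (Sum.elim some fun _ => none)).map Sum.inl).Sublist L := by
  induction L with
  | nil => simp
  | cons v t ih =>
    cases v with
    | inl a => simpa [List.filterMap_cons] using ih.cons₂ (Sum.inl a)
    | inr b => simpa [List.filterMap_cons] using ih.cons (Sum.inr b)

/-- for any finite tree graph `G` connecting the points `w_1,…,w_l`
(indexed by `Fin l`) together with internal points `u_1,…,u_q` (indexed by `Fin q`),
there is a chain (an ordering of the `w` points, depending only on the combinatorial
tree `G`) such that for every placement `p` of the vertices in the plane,
`‖C‖ ≤ 2‖T‖`, where the lengths are measured with `√dist`. -/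
theorem stmt0 (l q : ℕ) (hl : 1 ≤ l)
    (G : SimpleGraph (Fin l ⊕ Fin q)) [Fintype G.edgeSet]
    (hG : G.IsTree) :
    ∃ c : Equiv.Perm (Fin l),
      ∀ p : (Fin l ⊕ Fin q) → EuclideanSpace ℝ (Fin 2),
        ∑ i : Fin (l - 1),
            Real.sqrt (dist (p (Sum.inl (c ⟨i.1, by have := i.isLt; omega⟩)))
              (p (Sum.inl (c ⟨i.1 + 1, by have := i.isLt; omega⟩))))
          ≤ 2 * ∑ e ∈ G.edgeFinset,
              Sym2.lift ⟨fun a b => Real.sqrt (dist (p a) (p b)),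
                fun a b => by simp [dist_comm]⟩ e := by
  classical
  obtain ⟨L, hnd, hall, hbound⟩ := tour (Fintype.card (Fin l ⊕ Fin q)) _ G le_rfl hG
  set W : List (Fin l) := L.filterMap (Sum.elim some fun _ => none) with hW
  have hsub : (W.map Sum.inl).Sublist L := filterMap_inl_sublist L
  have hWnd : W.Nodup := (hnd.sublist hsub).of_map
  have hWall : ∀ i : Fin l, i ∈ W := by
    intro i
    rw [hW, List.mem_filterMap]
    exact ⟨Sum.inl i, hall _, rfl⟩
  have hlen : W.length = l := by
    have h1 : W.toFinset.card = W.length := List.toFinset_card_of_nodup hWnd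
    have h2 : W.toFinset = Finset.univ :=
      Finset.eq_univ_iff_forall.mpr fun i => List.mem_toFinset.mpr (hWall i)
    rw [h2] at h1
    simpa using h1.symm
  set e0 := hWnd.getEquivOfForallMemList W hWall with he0
  refine ⟨(finCongr hlen.symm).trans e0, ?_⟩
  intro p
  set δ : (Fin l ⊕ Fin q) → (Fin l ⊕ Fin q) → ℝ :=
    fun a b => Real.sqrt (dist (p a) (p b)) with hδ
  have hnn : ∀ a b, 0 ≤ δ a b := fun a b => Real.sqrt_nonneg _
  have hsy : ∀ a b, δ a b = δ b a := fun a b => by simp [hδ, dist_comm]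
  have htr : ∀ a b c, δ a c ≤ δ a b + δ b c := fun a b c => sqrt_triangle _ _ _
  set f : Sym2 (Fin l ⊕ Fin q) → ℝ :=
    Sym2.lift ⟨fun a b => Real.sqrt (dist (p a) (p b)),
      fun a b => by simp [dist_comm]⟩ with hf
  have hmain := hbound δ f hnn hsy htr (fun a b _ => le_of_eq (by simp [hδ, hf]))
    (fun e => Sym2.ind (fun a b => by simp [hf, Real.sqrt_nonneg]) e)
  set δ' : Fin l → Fin l → ℝ := fun i j => δ (Sum.inl i) (Sum.inl j) with hδ'
  have hchain : chainSum δ' W ≤ 2 * ∑ e ∈ G.edgeFinset, f e := by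
    calc chainSum δ' W = chainSum δ (W.map Sum.inl) := chainSum_map _ _
      _ ≤ chainSum δ L := chainSum_sublist hnn htr hsub
      _ ≤ _ := hmain
  refine le_trans (le_of_eq ?_) hchain
  have hl1 : W.length - 1 = l - 1 := by rw [hlen]
  have hc : ∀ (j : ℕ) (hj : j < l), (Equiv.trans (finCongr hlen.symm) e0) ⟨j, hj⟩
      = W.get ⟨j, by omega⟩ := by
    intro j hj
    simp [he0, finCongr]
  refine Eq.trans (Fin.sum_congr' _ hl1).symm ?_
  rw [chainSum_eq_sum_fin (δ := δ') W]
  apply Finset.sum_congr rfl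
  intro i _
  have hi := i.isLt
  rw [hc, hc]
  rfl

end
end

section
/- For every ε > 0 and every integer s ≥ 2, the sum over all labeled trees T on the vertex set {1,...,s} of the product over edges ⟨r,m⟩ ∈ T of n_r · n_m is bounded by s! · ε^{-2(s-1)} · ∏_{r=1}^s e^{2ε n_r}, for any positive integers n_1,...,n_s. -/
open SimpleGraph Finset

section TreeParent
variable {V : Type*} (G : SimpleGraph V) (hG : G.IsTree) (root : V)

noncomputable def treePath (v : V) : G.Walk v root :=
  (hG.existsUnique_path v root).choose

lemma treePath_isPath (v : V) : (treePath G hG root v).IsPath :=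
  (hG.existsUnique_path v root).choose_spec.1

lemma treePath_unique {v : V} (p : G.Walk v root) (hp : p.IsPath) :
    p = treePath G hG root v :=
  (hG.existsUnique_path v root).choose_spec.2 p hp

noncomputable def treeParent (v : V) : V := (treePath G hG root v).getVert 1

lemma treePath_not_nil {v : V} (hv : v ≠ root) : ¬ (treePath G hG root v).Nil :=
  SimpleGraph.Walk.not_nil_of_ne hv

lemma treeParent_adj {v : V} (hv : v ≠ root) : G.Adj v (treeParent G hG root v) :=
  (treePath G hG root v).adj_snd (treePath_not_nil G hG root hv)

lemma treeParent_length {v : V} (hv : v ≠ root) :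
    (treePath G hG root (treeParent G hG root v)).length + 1
      = (treePath G hG root v).length := by
  have hnil := treePath_not_nil G hG root hv
  have htail : (treePath G hG root v).tail.IsPath :=
    (treePath_isPath G hG root v).tail
  have := treePath_unique G hG root ((treePath G hG root v).tail) htail
  rw [treeParent, ← this]
  exact SimpleGraph.Walk.length_tail_add_one hnil

lemma treeParent_inj {v w : V} (hv : v ≠ root) (hw : w ≠ root)
    (h : s(v, treeParent G hG root v) = s(w, treeParent G hG root w)) : v = w := by
  rw [Sym2.eq_iff] at h
  rcases h with ⟨h1, _⟩ | ⟨h1, h2⟩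
  · exact h1
  · exfalso
    have l1 := treeParent_length G hG root hv
    have l2 := treeParent_length G hG root hw
    rw [h2] at l1
    rw [← h1] at l2
    omega

end TreeParent

section TreeParentFin
variable {V : Type*} [Fintype V] [DecidableEq V] (G : SimpleGraph V)
  [Fintype G.edgeSet] (hG : G.IsTree) (root : V)

lemma treeParent_image :
    (Finset.univ.erase root).image (fun v => s(v, treeParent G hG root v))
      = G.edgeFinset := by
  apply Finset.eq_of_subset_of_card_le
  · intro e he
    simp only [Finset.mem_image, Finset.mem_erase] at he
    obtain ⟨v, ⟨hv, -⟩, rfl⟩ := he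
    rw [SimpleGraph.mem_edgeFinset]
    exact treeParent_adj G hG root hv
  · rw [Finset.card_image_of_injOn, Finset.card_erase_of_mem (Finset.mem_univ _),
      Finset.card_univ]
    · have := hG.card_edgeFinset
      omega
    · intro v hv w hw h
      exact treeParent_inj G hG root (Finset.mem_erase.1 hv).1 (Finset.mem_erase.1 hw).1 h

lemma treeParent_prod (f : Sym2 V → ℝ) :
    ∏ e ∈ G.edgeFinset, f e
      = ∏ v ∈ Finset.univ.erase root, f s(v, treeParent G hG root v) := by
  rw [← treeParent_image G hG root, Finset.prod_image]
  intro v hv w hw h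
  exact treeParent_inj G hG root (Finset.mem_erase.1 hv).1 (Finset.mem_erase.1 hw).1 h

end TreeParentFin



/- STATEMENT 5: the weighted sum over labeled (spanning) trees on `{1,…,s}` of the
product over edges `⟨r,m⟩` of `n_r · n_m` is bounded by
`s! ε^{-2(s-1)} ∏_r e^{2ε n_r}`. -/
open scoped Classical in
theorem stmt5 (s : ℕ) (hs : 2 ≤ s) (ε : ℝ) (hε : 0 < ε)
    (n : Fin s → ℕ) (hn : ∀ r, 1 ≤ n r) :
    ∑ G ∈ Finset.univ.filter (fun G : SimpleGraph (Fin s) => G.IsTree),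
        ∏ e ∈ G.edgeFinset,
          Sym2.lift ⟨fun a b => ((n a : ℝ) * n b), fun a b => by ring⟩ e
      ≤ (s.factorial : ℝ) * (ε ^ (2 * (s - 1)))⁻¹ *
          ∏ r : Fin s, Real.exp (2 * ε * n r) := by
  classical
  have hspos : 0 < s := by omega
  haveI : NeZero s := ⟨by omega⟩
  set w : Sym2 (Fin s) → ℝ :=
    Sym2.lift ⟨fun a b => ((n a : ℝ) * n b), fun a b => by ring⟩ with hw
  set T := Finset.univ.filter (fun G : SimpleGraph (Fin s) => G.IsTree) with hT
  set Φ : SimpleGraph (Fin s) → (Fin s → Fin s) := fun G =>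
    if h : G.IsTree then (fun v => if v = 0 then 0 else treeParent G h 0 v)
    else (fun _ => 0) with hΦ
  set g : Fin s → Fin s → ℝ := fun v j => if v = 0 then 1 else (n v : ℝ) * n j with hg
  have hg0 : ∀ v j, 0 ≤ g v j := by
    intro v j; rw [hg]; dsimp only; split <;> positivity
  set W : (Fin s → Fin s) → ℝ := fun f => ∏ v, g v (f v) with hW
  have hW0 : ∀ f, 0 ≤ W f := fun f => Finset.prod_nonneg fun v _ => hg0 v (f v)
  set N : ℝ := ∑ j, (n j : ℝ) with hN
  have hN0 : (0:ℝ) ≤ N := Finset.sum_nonneg fun j _ => by positivity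
  -- the weight of a tree is W of its parent function
  have key : ∀ G : SimpleGraph (Fin s), G.IsTree →
      (∏ e ∈ G.edgeFinset, w e) = W (Φ G) := by
    intro G h
    rw [hW]
    dsimp only
    rw [← Finset.prod_erase_mul _ _ (Finset.mem_univ (0 : Fin s))]
    have h0 : g 0 (Φ G 0) = 1 := by simp [hg]
    rw [h0, mul_one, treeParent_prod G h 0 w]
    refine Finset.prod_congr rfl ?_
    intro v hv
    have hv0 : v ≠ 0 := (Finset.mem_erase.1 hv).1
    rw [hΦ, hg]
    simp only [dif_pos h, if_neg hv0, hw, Sym2.lift_mk]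
  -- Φ is injective on trees
  have hinj : Set.InjOn Φ (T : Set (SimpleGraph (Fin s))) := by
    intro G hGm G' hGm' hEq
    have hGt : G.IsTree := (Finset.mem_filter.1 hGm).2
    have hGt' : G'.IsTree := (Finset.mem_filter.1 hGm').2
    have img : ∀ (H : SimpleGraph (Fin s)) (hH : H.IsTree),
        H.edgeFinset = (Finset.univ.erase 0).image (fun v => s(v, Φ H v)) := by
      intro H hH
      rw [← treeParent_image H hH 0]
      refine Finset.image_congr ?_
      intro v hv
      have hv0 : v ≠ 0 := (Finset.mem_erase.1 hv).1
      rw [hΦ]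
      simp only [dif_pos hH, if_neg hv0]
    have : G.edgeFinset = G'.edgeFinset := by
      rw [img G hGt, img G' hGt', hEq]
    exact SimpleGraph.edgeFinset_inj.1 this
  have card_erase : (Finset.univ.erase (0 : Fin s)).card = s - 1 := by
    rw [Finset.card_erase_of_mem (Finset.mem_univ _), Finset.card_univ, Fintype.card_fin]
  -- analytic bounds
  have h1 : ∀ v : Fin s, (n v : ℝ) ≤ ε⁻¹ * Real.exp (ε * n v) := by
    intro v
    have h := Real.add_one_le_exp (ε * n v)
    rw [← mul_le_mul_iff_right₀ hε]
    have : ε * (ε⁻¹ * Real.exp (ε * n v)) = Real.exp (ε * n v) := by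
      field_simp
    rw [this]; nlinarith
  have h2 : ∏ v ∈ Finset.univ.erase (0 : Fin s), (n v : ℝ)
      ≤ (ε⁻¹) ^ (s - 1) * ∏ v ∈ Finset.univ.erase (0 : Fin s), Real.exp (ε * n v) := by
    calc ∏ v ∈ Finset.univ.erase (0 : Fin s), (n v : ℝ)
        ≤ ∏ v ∈ Finset.univ.erase (0 : Fin s), (ε⁻¹ * Real.exp (ε * n v)) := by
          refine Finset.prod_le_prod (fun v _ => by positivity) (fun v _ => h1 v)
      _ = (ε⁻¹) ^ (s - 1) * ∏ v ∈ Finset.univ.erase (0 : Fin s), Real.exp (ε * n v) := by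
          rw [Finset.prod_mul_distrib, Finset.prod_const, card_erase]
  have h3 : N ^ (s - 1) ≤ (s - 1).factorial * (ε⁻¹) ^ (s - 1) * Real.exp (ε * N) := by
    have h := Real.pow_div_factorial_le_exp (x := ε * N) (mul_nonneg hε.le hN0) (s - 1)
    rw [div_le_iff₀ (by positivity)] at h
    have hNe : N ^ (s-1) = (ε⁻¹) ^ (s-1) * (ε * N) ^ (s-1) := by
      rw [mul_pow, ← mul_assoc, ← mul_pow, inv_mul_cancel₀ hε.ne', one_pow, one_mul]
    rw [hNe]
    calc (ε⁻¹) ^ (s-1) * (ε * N) ^ (s-1)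
        ≤ (ε⁻¹) ^ (s-1) * (Real.exp (ε * N) * (s-1).factorial) := by
          gcongr
      _ = (s - 1).factorial * (ε⁻¹) ^ (s - 1) * Real.exp (ε * N) := by ring
  have hexpN : Real.exp (ε * N) = ∏ v : Fin s, Real.exp (ε * n v) := by
    rw [hN, Finset.mul_sum, Real.exp_sum]
  have hmono : ∏ v ∈ Finset.univ.erase (0 : Fin s), Real.exp (ε * n v)
      ≤ ∏ v : Fin s, Real.exp (ε * n v) := by
    rw [← Finset.prod_erase_mul _ _ (Finset.mem_univ (0 : Fin s))]
    exact le_mul_of_one_le_right (Finset.prod_nonneg fun v _ => (Real.exp_pos _).le)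
      (Real.one_le_exp (by positivity))

  have hprod2 : (∏ v : Fin s, Real.exp (ε * n v)) * (∏ v : Fin s, Real.exp (ε * n v))
      = ∏ r : Fin s, Real.exp (2 * ε * n r) := by
    rw [← Finset.prod_mul_distrib]
    refine Finset.prod_congr rfl ?_
    intro v _
    rw [← Real.exp_add]
    ring_nf
  have hfact : (s : ℝ) * (s - 1).factorial = s.factorial := by
    rw [← Nat.cast_mul, Nat.mul_factorial_pred hspos.ne']
  have hepow : (ε⁻¹) ^ (s-1) * (ε⁻¹) ^ (s-1) = (ε ^ (2 * (s - 1)))⁻¹ := by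
    rw [← pow_add, ← inv_pow]
    congr 1
    omega
  -- main calc
  calc ∑ G ∈ T, ∏ e ∈ G.edgeFinset, w e
      = ∑ G ∈ T, W (Φ G) := by
        refine Finset.sum_congr rfl ?_
        intro G hGm
        exact key G (Finset.mem_filter.1 hGm).2
    _ = ∑ f ∈ T.image Φ, W f := (Finset.sum_image (fun x hx y hy h => hinj hx hy h)).symm
    _ ≤ ∑ f : Fin s → Fin s, W f :=
        Finset.sum_le_sum_of_subset_of_nonneg (Finset.subset_univ _) (fun f _ _ => hW0 f)
    _ = ∏ v : Fin s, ∑ j : Fin s, g v j := by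
        rw [Finset.prod_univ_sum, Fintype.piFinset_univ]
    _ = (s : ℝ) * ((∏ v ∈ Finset.univ.erase (0 : Fin s), (n v : ℝ)) * N ^ (s - 1)) := by
        rw [← Finset.prod_erase_mul _ _ (Finset.mem_univ (0 : Fin s))]
        have h0 : ∑ j : Fin s, g 0 j = (s : ℝ) := by
          simp [hg]
        have hterm : ∀ v ∈ Finset.univ.erase (0 : Fin s),
            (∑ j : Fin s, g v j) = (n v : ℝ) * N := by
          intro v hv
          have hv0 : v ≠ 0 := (Finset.mem_erase.1 hv).1
          rw [hg, hN]
          simp only [if_neg hv0]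
          rw [← Finset.mul_sum]
        rw [h0, Finset.prod_congr rfl hterm, Finset.prod_mul_distrib,
          Finset.prod_const, card_erase]
        ring
    _ ≤ (s : ℝ) * (((ε⁻¹) ^ (s - 1) * ∏ v ∈ Finset.univ.erase (0 : Fin s), Real.exp (ε * n v))
          * ((s - 1).factorial * (ε⁻¹) ^ (s - 1) * Real.exp (ε * N))) := by
        refine mul_le_mul_of_nonneg_left
          (mul_le_mul h2 h3 (by positivity) (by positivity)) (by positivity)
    _ = ((s : ℝ) * (s - 1).factorial) * ((ε⁻¹) ^ (s-1) * (ε⁻¹) ^ (s-1)) *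
          ((∏ v ∈ Finset.univ.erase (0 : Fin s), Real.exp (ε * n v)) * Real.exp (ε * N)) := by
        ring
    _ ≤ ((s : ℝ) * (s - 1).factorial) * ((ε⁻¹) ^ (s-1) * (ε⁻¹) ^ (s-1)) *
          ((∏ v : Fin s, Real.exp (ε * n v)) * Real.exp (ε * N)) := by
        refine mul_le_mul_of_nonneg_left
          (mul_le_mul_of_nonneg_right hmono (Real.exp_pos _).le) (by positivity)
    _ = (s.factorial : ℝ) * (ε ^ (2 * (s - 1)))⁻¹ * ∏ r : Fin s, Real.exp (2 * ε * n r) := by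
        rw [hfact, hepow, hexpN, hprod2]
end

section
/- With the notation of the Sine-Gordon covariance decomposition: in the neutral case Q = ∑σ_r = 0, taking also N → ∞ yields E[ ∏_{r=1}^n :e^{iασ_r φ(x_r)}: ] = c^{−(α²/8π)n} · ∏_{r<s} |x_r − x_s|^{σ_r σ_s α²/(2π)}, using that Δ⁻¹(x) := lim_{N→∞} Δ⁻¹_N(x) = −(1/2π) log|x|. -/
open Real Filter

/-- The single–scale Sine-Gordon covariance. -/
noncomputable def sgC0 (γ : ℝ) (x : EuclideanSpace ℝ (Fin 2)) : ℝ :=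
  (2 * π)⁻¹ ^ 2 *
    ∫ k : EuclideanSpace ℝ (Fin 2),
      ((Real.exp (-‖k‖ ^ 2) - Real.exp (-(γ * ‖k‖) ^ 2)) / ‖k‖ ^ 2) *
        Real.cos ((inner ℝ k x : ℝ))

/-- The cutoff covariance `C_{h,N}(x) = ∑_{j=h}^{N} C₀(γ^j x)`. -/
noncomputable def sgCov (γ : ℝ) (h N : ℤ) (x : EuclideanSpace ℝ (Fin 2)) : ℝ :=
  ∑ j ∈ Finset.Icc h N, sgC0 γ ((γ ^ j : ℝ) • x)

/-- in the neutral case `Q = ∑ σ_r = 0`, taking also `N → ∞` in the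
`h → −∞` limit of `E_{h,N}[∏_r :e^{iασ_rφ(x_r)}:]`, i.e. in
`c^{−α²n/(8π)} exp(−α² ∑_{r<s} σ_rσ_s Δ⁻¹_N(x_r−x_s))`, yields
`c^{−α²n/(8π)} ∏_{r<s} |x_r−x_s|^{σ_rσ_s α²/(2π)}`, using that
`Δ⁻¹_N(x) → −(1/2π) log |x|` as `N → ∞`. -/
theorem stmt10 (γ c α : ℝ) (hγ : 1 < γ) (hc : 0 < c)
    (n : ℕ) (x : Fin n → EuclideanSpace ℝ (Fin 2)) (hx : Function.Injective x)
    (σ : Fin n → ℝ) (hσ : ∀ r, σ r = 1 ∨ σ r = -1) (hQ : ∑ r, σ r = 0)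
    (Δ : ℤ → EuclideanSpace ℝ (Fin 2) → ℝ)
    (hΔ : ∀ (N : ℤ) (r s : Fin n), r ≠ s →
      Tendsto
        (fun h : ℤ =>
          sgCov γ h N (x r - x s) + (1 / (4 * π)) * Real.log (c * γ ^ (2 * h)))
        atBot (nhds (Δ N (x r - x s))))
    (hΔlim : ∀ r s : Fin n, r ≠ s →
      Tendsto (fun N : ℤ => Δ N (x r - x s)) atTop
        (nhds (-(1 / (2 * π)) * Real.log ‖x r - x s‖))) :
    Tendsto
      (fun N : ℤ =>
        c ^ (-(α ^ 2 / (8 * π)) * n) *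
          Real.exp (-(α ^ 2) * ∑ r, ∑ s, if r < s then σ r * σ s * Δ N (x r - x s) else 0))
      atTop
      (nhds (c ^ (-(α ^ 2 / (8 * π)) * n) *
        ∏ r, ∏ s, if r < s then ‖x r - x s‖ ^ (σ r * σ s * α ^ 2 / (2 * π)) else 1)) := by
  have hsum : Tendsto
      (fun N : ℤ => ∑ r, ∑ s, if r < s then σ r * σ s * Δ N (x r - x s) else 0)
      atTop (nhds (∑ r, ∑ s, if r < s then
        σ r * σ s * (-(1 / (2 * π)) * Real.log ‖x r - x s‖) else 0)) := by
    refine tendsto_finset_sum _ fun r _ => tendsto_finset_sum _ fun s _ => ?_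
    by_cases hrs : r < s
    · simp only [hrs, if_true]
      exact (hΔlim r s hrs.ne).const_mul _
    · simp only [hrs, if_false]; exact tendsto_const_nhds
  have hexp := ((Real.continuous_exp.continuousAt.tendsto.comp
      (hsum.const_mul (-(α ^ 2)))).const_mul (c ^ (-(α ^ 2 / (8 * π)) * (n : ℝ))))
  have key : (∏ r, ∏ s, if r < s then ‖x r - x s‖ ^ (σ r * σ s * α ^ 2 / (2 * π)) else 1)
      = Real.exp (-(α ^ 2) * ∑ r, ∑ s, if r < s then
          σ r * σ s * (-(1 / (2 * π)) * Real.log ‖x r - x s‖) else 0) := by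
    rw [Finset.mul_sum, Real.exp_sum]
    refine Finset.prod_congr rfl fun r _ => ?_
    rw [Finset.mul_sum, Real.exp_sum]
    refine Finset.prod_congr rfl fun s _ => ?_
    by_cases hrs : r < s
    · simp only [hrs, if_true]
      have hne : x r ≠ x s := fun h => hrs.ne (hx h)
      have hpos : 0 < ‖x r - x s‖ := by
        rw [norm_pos_iff, sub_ne_zero]; exact hne
      rw [Real.rpow_def_of_pos hpos]
      congr 1
      ring
    · simp [hrs]
  rw [key]
  exact hexp
end

section
/- In the same setting, if both X = {x_1,x_2} and Y = {y_1,y_2} are dipoles (two points with opposite charges each), then |W_j(X,Y)| ≤ C γ^{2j} |x_1−x_2| |y_1−y_2| ∫_0^1∫_0^1 dt ds e^{−γ^j |x_2 + t(x_1−x_2) − y_2 − s(y_1−y_2)|}, where W_j(X,Y) = C_j(x_1−y_1) − C_j(x_2−y_1) − C_j(x_1−y_2) + C_j(x_2−y_2). -/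
set_option maxHeartbeats 2000000 in

/-- with `C_j(x) = C₀(γ^j x)` and `C₀` smooth with all derivatives
decaying faster than any exponential, the dipole–dipole interaction energy
`W_j(X,Y) = C_j(x₁−y₁) − C_j(x₂−y₁) − C_j(x₁−y₂) + C_j(x₂−y₂)` satisfies
`|W_j| ≤ C γ^{2j} |x₁−x₂||y₁−y₂| ∫₀¹∫₀¹ dt ds e^{−γ^j|x₂+t(x₁−x₂)−y₂−s(y₁−y₂)|}`. -/
theorem stmt12 (γ : ℝ) (hγ : 1 < γ) (C0 : EuclideanSpace ℝ (Fin 2) → ℝ)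
    (hsmooth : ContDiff ℝ (⊤ : ℕ∞) C0)
    (hdecay : ∀ (m : ℕ) (κ : ℝ), 0 < κ → ∃ A : ℝ,
      ∀ x, ‖iteratedFDeriv ℝ m C0 x‖ ≤ A * Real.exp (-κ * ‖x‖)) :
    ∃ Cc : ℝ, 0 < Cc ∧
      ∀ (j : ℕ) (x1 x2 y1 y2 : EuclideanSpace ℝ (Fin 2)),
        |C0 ((γ ^ j : ℝ) • (x1 - y1)) - C0 ((γ ^ j : ℝ) • (x2 - y1))
            - C0 ((γ ^ j : ℝ) • (x1 - y2)) + C0 ((γ ^ j : ℝ) • (x2 - y2))|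
          ≤ Cc * γ ^ (2 * j) * ‖x1 - x2‖ * ‖y1 - y2‖ *
            ∫ t in (0 : ℝ)..1, ∫ s in (0 : ℝ)..1,
              Real.exp (-(γ ^ j * ‖x2 + t • (x1 - x2) - y2 - s • (y1 - y2)‖)) := by
  obtain ⟨A, hA⟩ := hdecay 2 1 one_pos
  have hA0 : 0 ≤ A := by
    have h0 := hA 0
    nlinarith [norm_nonneg (iteratedFDeriv ℝ 2 C0 0),
      Real.exp_pos (-1 * ‖(0 : EuclideanSpace ℝ (Fin 2))‖)]
  refine ⟨A + 1, by linarith, ?_⟩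
  intro j x1 x2 y1 y2
  set c : ℝ := γ ^ j with hc
  have hc0 : 0 < c := pow_pos (lt_trans one_pos hγ) j
  set u : EuclideanSpace ℝ (Fin 2) := x1 - x2 with hu
  set v : EuclideanSpace ℝ (Fin 2) := y1 - y2 with hv
  set w : ℝ → ℝ → EuclideanSpace ℝ (Fin 2) := fun t s => x2 + t • u - y2 - s • v with hw
  set z : ℝ → ℝ → EuclideanSpace ℝ (Fin 2) := fun t s => c • w t s with hz
  have hdiff : Differentiable ℝ C0 := hsmooth.differentiable (by simp)
  set B : EuclideanSpace ℝ (Fin 2) → (EuclideanSpace ℝ (Fin 2) →L[ℝ] ℝ) := fun p => fderiv ℝ C0 p with hBdef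
  have hBsmooth : ContDiff ℝ (⊤ : ℕ∞) B := hsmooth.fderiv_right (by simp)
  have hBdiff : Differentiable ℝ B := hBsmooth.differentiable (by simp)
  have hBcont : Continuous B := hBdiff.continuous
  have hB'smooth : ContDiff ℝ (⊤ : ℕ∞) (fun p => fderiv ℝ B p) :=
    hBsmooth.fderiv_right (m := (⊤ : ℕ∞)) (by simp)
  have hB'cont : Continuous (fun p => fderiv ℝ B p) := hB'smooth.continuous
  -- joint continuity of w and z
  have hwcont : Continuous (fun p : ℝ × ℝ => w p.1 p.2) := by
    simp only [hw]; fun_prop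
  have hzcont : Continuous (fun p : ℝ × ℝ => z p.1 p.2) := by
    simp only [hz]; exact hwcont.const_smul c
  have hzcont_t : ∀ s, Continuous (fun t => z t s) := fun s =>
    by have h := hzcont.comp ((continuous_id (X := ℝ)).prodMk (continuous_const (y := s))); exact h
  have hzcont_s : ∀ t, Continuous (fun s => z t s) := fun t =>
    by have h := hzcont.comp ((continuous_const (y := t)).prodMk (continuous_id (X := ℝ))); exact h
  -- derivatives of the path
  have hzt : ∀ s t : ℝ, HasDerivAt (fun t => z t s) (c • u) t := by
    intro s t
    have h1 : HasDerivAt (fun t : ℝ => w t s) u t := by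
      have : HasDerivAt (fun t : ℝ => t • u) ((1 : ℝ) • u) t :=
        (hasDerivAt_id t).smul_const u
      have h := ((this.const_add x2).sub_const y2).sub_const (s • v)
      rw [one_smul] at h
      exact h
    exact h1.const_smul c
  have hzs : ∀ t s : ℝ, HasDerivAt (fun s => z t s) (-(c • v)) s := by
    intro t s
    have h1 : HasDerivAt (fun s : ℝ => w t s) (-v) s := by
      have : HasDerivAt (fun s : ℝ => s • v) ((1 : ℝ) • v) s :=
        (hasDerivAt_id s).smul_const v
      have h := (hasDerivAt_const s (x2 + t • u - y2)).sub this
      rw [one_smul, zero_sub] at h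
      exact h
    have := h1.const_smul c
    rw [smul_neg] at this
    exact this
  -- first derivative function and second derivative function
  set k : ℝ → ℝ → ℝ := fun t s => B (z t s) (c • u) with hk
  set K : ℝ → ℝ → ℝ := fun t s => fderiv ℝ B (z t s) (-(c • v)) (c • u) with hK
  have hkder : ∀ s t : ℝ, HasDerivAt (fun t => C0 (z t s)) (k t s) t := by
    intro s t
    exact (hdiff (z t s)).hasFDerivAt.comp_hasDerivAt t (hzt s t)
  have hKder : ∀ t s : ℝ, HasDerivAt (fun s => k t s) (K t s) s := by
    intro t s
    have h1 : HasDerivAt (fun s => B (z t s)) (fderiv ℝ B (z t s) (-(c • v))) s :=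
      (hBdiff (z t s)).hasFDerivAt.comp_hasDerivAt s (hzs t s)
    have h2 := h1.clm_apply (hasDerivAt_const s (c • u))
    simp only [map_zero, add_zero] at h2
    exact h2
  -- continuity of k and K
  have hkcont : Continuous (fun p : ℝ × ℝ => k p.1 p.2) :=
    (hBcont.comp hzcont).clm_apply continuous_const
  have hKcont : Continuous (fun p : ℝ × ℝ => K p.1 p.2) :=
    ((hB'cont.comp hzcont).clm_apply continuous_const).clm_apply continuous_const
  -- FTC in t, for s = 0 and s = 1
  have ftc_t : ∀ s : ℝ, C0 (z 1 s) - C0 (z 0 s) = ∫ t in (0:ℝ)..1, k t s := by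
    intro s
    rw [intervalIntegral.integral_eq_sub_of_hasDerivAt (fun t _ => hkder s t)]
    have h := hkcont.comp ((continuous_id (X := ℝ)).prodMk (continuous_const (y := s)))
    exact h.intervalIntegrable 0 1
  -- FTC in s
  have ftc_s : ∀ t : ℝ, k t 1 - k t 0 = ∫ s in (0:ℝ)..1, K t s := by
    intro t
    rw [intervalIntegral.integral_eq_sub_of_hasDerivAt (fun s _ => hKder t s)]
    have h := hKcont.comp ((continuous_const (y := t)).prodMk (continuous_id (X := ℝ)))
    exact h.intervalIntegrable 0 1
  -- identify the four corner points
  have e11 : z 1 1 = c • (x1 - y1) := by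
    simp only [hz, hw, hu, hv]; module
  have e01 : z 0 1 = c • (x2 - y1) := by
    simp only [hz, hw, hu, hv]; module
  have e10 : z 1 0 = c • (x1 - y2) := by
    simp only [hz, hw, hu, hv]; module
  have e00 : z 0 0 = c • (x2 - y2) := by
    simp only [hz, hw, hu, hv]; module
  -- the expression as a double integral
  have hexpr : C0 (c • (x1 - y1)) - C0 (c • (x2 - y1)) - C0 (c • (x1 - y2))
      + C0 (c • (x2 - y2))
      = ∫ t in (0:ℝ)..1, ∫ s in (0:ℝ)..1, K t s := by
    have h1 := ftc_t 1
    have h0 := ftc_t 0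
    rw [e11, e01] at h1
    rw [e10, e00] at h0
    have hint1 : IntervalIntegrable (fun t => k t 1) MeasureTheory.volume 0 1 :=
      by have h := hkcont.comp ((continuous_id (X := ℝ)).prodMk (continuous_const (y := (1:ℝ)))); exact h.intervalIntegrable 0 1
    have hint0 : IntervalIntegrable (fun t => k t 0) MeasureTheory.volume 0 1 :=
      by have h := hkcont.comp ((continuous_id (X := ℝ)).prodMk (continuous_const (y := (0:ℝ)))); exact h.intervalIntegrable 0 1
    calc C0 (c • (x1 - y1)) - C0 (c • (x2 - y1)) - C0 (c • (x1 - y2)) + C0 (c • (x2 - y2))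
        = (C0 (c • (x1 - y1)) - C0 (c • (x2 - y1)))
          - (C0 (c • (x1 - y2)) - C0 (c • (x2 - y2))) := by ring
      _ = (∫ t in (0:ℝ)..1, k t 1) - ∫ t in (0:ℝ)..1, k t 0 := by rw [h1, h0]
      _ = ∫ t in (0:ℝ)..1, (k t 1 - k t 0) := (intervalIntegral.integral_sub hint1 hint0).symm
      _ = ∫ t in (0:ℝ)..1, ∫ s in (0:ℝ)..1, K t s := by
          exact intervalIntegral.integral_congr fun t _ => ftc_s t
  -- pointwise bound on K
  have hKbound : ∀ t s : ℝ, |K t s| ≤ A * (c * ‖v‖) * (c * ‖u‖)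
      * Real.exp (-(c * ‖w t s‖)) := by
    intro t s
    have heq : K t s = iteratedFDeriv ℝ 2 C0 (z t s) ![-(c • v), c • u] := by
      rw [iteratedFDeriv_two_apply]
      simp [hK]
      exact Or.inl rfl
    have hle : |K t s| ≤ ‖iteratedFDeriv ℝ 2 C0 (z t s)‖ * (‖-(c • v)‖ * ‖c • u‖) := by
      rw [heq]
      have := (iteratedFDeriv ℝ 2 C0 (z t s)).le_opNorm ![-(c • v), c • u]
      simpa [Fin.prod_univ_two, Real.norm_eq_abs, mul_assoc] using this
    have hnz : ‖z t s‖ = c * ‖w t s‖ := by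
      rw [hz]; simp [norm_smul, abs_of_pos hc0]
    have hdec := hA (z t s)
    rw [hnz] at hdec
    calc |K t s| ≤ ‖iteratedFDeriv ℝ 2 C0 (z t s)‖ * (‖-(c • v)‖ * ‖c • u‖) := hle
      _ ≤ (A * Real.exp (-1 * (c * ‖w t s‖))) * (‖-(c • v)‖ * ‖c • u‖) := by
          apply mul_le_mul_of_nonneg_right hdec
          positivity
      _ = A * (c * ‖v‖) * (c * ‖u‖) * Real.exp (-(c * ‖w t s‖)) := by
          rw [norm_neg]
          simp [norm_smul, abs_of_pos hc0]
          ring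
  -- the exponential integrand, continuity
  have hecont : Continuous (fun p : ℝ × ℝ => Real.exp (-(c * ‖w p.1 p.2‖))) := by
    have := hwcont.norm
    fun_prop
  -- inner integrals of the exponential are nonneg and the bound works
  set g : ℝ → ℝ := fun t => ∫ s in (0:ℝ)..1, Real.exp (-(c * ‖w t s‖)) with hg
  have hgcont : Continuous g := by
    apply intervalIntegral.continuous_parametric_intervalIntegral_of_continuous' (μ := MeasureTheory.volume)
      (f := fun t s => Real.exp (-(c * ‖w t s‖))) hecont
  have hgnonneg : ∀ t, 0 ≤ g t := fun t =>
    intervalIntegral.integral_nonneg zero_le_one fun s _ => (Real.exp_pos _).le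
  -- bound the inner integral
  have hinner : ∀ t : ℝ, |∫ s in (0:ℝ)..1, K t s| ≤ A * (c * ‖v‖) * (c * ‖u‖) * g t := by
    intro t
    have hb : IntervalIntegrable
        (fun s => A * (c * ‖v‖) * (c * ‖u‖) * Real.exp (-(c * ‖w t s‖)))
        MeasureTheory.volume 0 1 := by
      apply Continuous.intervalIntegrable
      apply continuous_const.mul
      simp only [hw]
      fun_prop
    have := intervalIntegral.norm_integral_le_of_norm_le
      (f := fun s => K t s) zero_le_one
      (MeasureTheory.ae_of_all _ fun s _ => by
        simpa [Real.norm_eq_abs] using hKbound t s) hb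
    rw [intervalIntegral.integral_const_mul] at this
    simpa [Real.norm_eq_abs, hg] using this
  have hIg : 0 ≤ ∫ t in (0:ℝ)..1, g t :=
    intervalIntegral.integral_nonneg zero_le_one fun t _ => hgnonneg t
  -- bound the outer integral
  have houter : |∫ t in (0:ℝ)..1, ∫ s in (0:ℝ)..1, K t s|
      ≤ A * (c * ‖v‖) * (c * ‖u‖) * ∫ t in (0:ℝ)..1, g t := by
    have hb : IntervalIntegrable (fun t => A * (c * ‖v‖) * (c * ‖u‖) * g t)
        MeasureTheory.volume 0 1 :=
      (continuous_const.mul hgcont).intervalIntegrable 0 1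
    have := intervalIntegral.norm_integral_le_of_norm_le
      (f := fun t => ∫ s in (0:ℝ)..1, K t s) zero_le_one
      (MeasureTheory.ae_of_all _ fun t _ => by
        simpa [Real.norm_eq_abs] using hinner t) hb
    rw [intervalIntegral.integral_const_mul] at this
    simpa [Real.norm_eq_abs] using this
  -- put everything together
  have hdgeq : (γ : ℝ) ^ (2 * j) = c * c := by
    rw [hc, ← pow_add]; ring_nf
  have hInn := hIg
  have hfold : (∫ t in (0:ℝ)..1, g t)
      = ∫ t in (0:ℝ)..1, ∫ s in (0:ℝ)..1,
          Real.exp (-(c * ‖x2 + t • u - y2 - s • v‖)) := by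
    simp only [hg, hw]
  have h1 : A * (c * ‖v‖) * (c * ‖u‖) ≤ (A + 1) * γ ^ (2 * j) * ‖u‖ * ‖v‖ := by
    rw [hdgeq]
    nlinarith [norm_nonneg u, norm_nonneg v, hc0.le,
      mul_nonneg (mul_nonneg (mul_nonneg hc0.le hc0.le) (norm_nonneg u)) (norm_nonneg v),
      mul_nonneg hc0.le hc0.le]
  rw [hexpr]
  calc |∫ t in (0:ℝ)..1, ∫ s in (0:ℝ)..1, K t s|
      ≤ A * (c * ‖v‖) * (c * ‖u‖) * ∫ t in (0:ℝ)..1, g t := houter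
    _ ≤ ((A + 1) * γ ^ (2 * j) * ‖u‖ * ‖v‖) * ∫ t in (0:ℝ)..1, g t :=
        mul_le_mul_of_nonneg_right h1 hInn
    _ = (A + 1) * γ ^ (2 * j) * ‖u‖ * ‖v‖ * ∫ t in (0:ℝ)..1, ∫ s in (0:ℝ)..1,
          Real.exp (-(c * ‖x2 + t • u - y2 - s • v‖)) := by rw [hfold]
end
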